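/- Let M ⊆ N be L-structures. Then M is ∃∀-closed in N if and only if there exists an elementary extension M' of M and a map f : N → M' fixing M pointwise such that f preserves all universal formulas, equivalently such that f(N) is ∃-closed in M'. -/

import Mathlib

/-!
If `f : N → M'` preserves universal formulas, it also preserves `∃∀`-formulas, since existential
witnesses can be carried along `f`. So an `∃∀`-formula with parameters in `M` that holds in `N`
holds in `M'`, and therefore in `M`, because `M ≼ M'`.

Conversely, let `M ⊆_{∃∀} N`. If a universal formula `φ(ā, b̄)` holds in `N`, with `ā` in `M`,
then the `∃∀`-formula `∃ȳ φ(ā, ȳ)` holds in `M`. Hence `φ(h ā, h b̄)` holds in `M` for some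
retraction `h : N → M` of the underlying sets. In nonempty structures a conjunction of universal
formulas is equivalent to a universal formula, so these sets of retractions form a filter base.
Take an ultrafilter `U` that contains all of them. Then `x ↦ [h ↦ h x]` maps `N` into the ultrapower
`M^U`, agrees on `M` with the diagonal elementary embedding and, by Łoś's theorem, preserves
universal formulas.
-/

open FirstOrder Language

universe u v w

/-- `IsQN true k φ` says that `φ` is a `Σ_k`-formula and `IsQN false k φ` says that `φ` is a
`Π_k`-formula.  In particular `IsQN true 2` captures the `∃∀`-formulas and `IsQN false 1` the
universal formulas. -/
inductive IsQN {L : FirstOrder.Language} {α : Type*} :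
    Bool → ℕ → {n : ℕ} → L.BoundedFormula α n → Prop
  | of_isQF {b k n} {φ : L.BoundedFormula α n} : φ.IsQF → IsQN b k φ
  | of_flip {b k n} {φ : L.BoundedFormula α n} : IsQN (!b) k φ → IsQN b (k + 1) φ
  | ex {k n} {φ : L.BoundedFormula α (n + 1)} : IsQN true (k + 1) φ → IsQN true (k + 1) φ.ex
  | all {k n} {φ : L.BoundedFormula α (n + 1)} : IsQN false (k + 1) φ → IsQN false (k + 1) φ.all

namespace FirstOrder.Language.BoundedFormula

variable {L : Language} {α β : Type*} {n : ℕ}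

theorem IsQF.toFormula {φ : L.BoundedFormula α n} (h : φ.IsQF) : φ.toFormula.IsQF := by
  induction h with
  | falsum => exact isQF_bot
  | of_isAtomic h =>
    cases h with
    | equal => exact (IsAtomic.equal _ _).isQF
    | rel => exact (IsAtomic.rel _ _).isQF
  | imp _ _ ih₁ ih₂ => exact ih₁.imp ih₂

theorem IsUniversal.relabel {φ : L.BoundedFormula α n} (h : φ.IsUniversal) {m : ℕ}
    (g : α → β ⊕ Fin m) : (φ.relabel g).IsUniversal := by
  induction h with
  | of_isQF h => exact (h.relabel g).isUniversal
  | all _ ih => rw [relabel_all]; exact ih.all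

theorem IsUniversal.formula_relabel {φ : L.Formula α} (h : φ.IsUniversal) (g : α → β) :
    (φ.relabel g).IsUniversal :=
  h.relabel _

theorem IsUniversal.toFormula {φ : L.BoundedFormula α n} (h : φ.IsUniversal) :
    φ.toFormula.IsUniversal := by
  induction h with
  | of_isQF h => exact h.toFormula.isUniversal
  | all _ ih => exact (ih.relabel _).all

theorem IsUniversal.alls {φ : L.BoundedFormula α n} (h : φ.IsUniversal) :
    φ.alls.IsUniversal := by
  induction n with
  | zero => exact h
  | succ n ih => exact ih h.all

theorem _root_.isQN_false_one_iff {φ : L.BoundedFormula α n} :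
    IsQN false 1 φ ↔ φ.IsUniversal := by
  constructor
  · intro h
    generalize hb : false = b, hk : 1 = k at h
    induction h with
    | of_isQF h => exact h.isUniversal
    | @of_flip b k n φ h =>
      obtain rfl : k = 0 := by omega
      subst hb
      cases h with
      | of_isQF h => exact h.isUniversal
    | ex => cases hb
    | all _ ih => exact (ih hb hk).all
  · intro h
    induction h with
    | of_isQF h => exact .of_isQF h
    | all _ ih => exact ih.all

theorem _root_.IsQN.exs {φ : L.BoundedFormula α n} (h : IsQN true 2 φ) : IsQN true 2 φ.exs := by
  induction n with
  | zero => exact h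
  | succ n ih => exact ih h.ex

theorem IsUniversal.exists_isQF_realize_iff {φ : L.BoundedFormula α n} (h : φ.IsUniversal) :
    ∃ (r : ℕ) (ψ : L.BoundedFormula α (n + r)), ψ.IsQF ∧
      ∀ {K : Type*} [L.Structure K] (v : α → K) (xs : Fin n → K),
        φ.Realize v xs ↔ ∀ ys : Fin r → K, ψ.Realize v (Fin.append xs ys) := by
  induction h with
  | of_isQF h =>
    refine ⟨0, _, h, fun v xs => ?_⟩
    simp only [Fin.append_right_nil _ _ rfl]
    exact ⟨fun h _ => h, fun h => h finZeroElim⟩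
  | @all n φ _ ih =>
    obtain ⟨r, ψ, hψ, hφψ⟩ := ih
    refine ⟨r + 1, ψ.castLE (Nat.succ_add_eq_add_succ n r).le, hψ.castLE, fun v xs => ?_⟩
    simp only [realize_all, hφψ, Fin.forall_fin_succ_pi,
      realize_castLE_of_eq (Nat.succ_add_eq_add_succ n r), Fin.append_left_snoc]

theorem IsQF.isUniversal_iAlls [Finite β] {φ : L.Formula (α ⊕ β)} (h : φ.IsQF) :
    (φ.iAlls β).IsUniversal :=
  (h.relabel _).isUniversal.alls

theorem IsUniversal.isQN_iExs [Finite β] {φ : L.Formula (α ⊕ β)} (h : φ.IsUniversal) :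
    IsQN true 2 (φ.iExs β) :=
  (IsQN.of_flip (b := true) (isQN_false_one_iff.2 (h.relabel _))).exs

theorem IsUniversal.exists_isQF_formula_realize_iff {φ : L.Formula α} (h : φ.IsUniversal) :
    ∃ (r : ℕ) (ψ : L.Formula (α ⊕ Fin r)), ψ.IsQF ∧
      ∀ {K : Type*} [L.Structure K] (v : α → K),
        φ.Realize v ↔ ∀ ys : Fin r → K, ψ.Realize (Sum.elim v ys) := by
  obtain ⟨r, ψ, hψ, hφψ⟩ := h.exists_isQF_realize_iff
  refine ⟨r, ψ.toFormula.relabel (Sum.map id (Fin.cast (zero_add r))),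
    hψ.toFormula.relabel _, fun v => ?_⟩
  rw [Formula.Realize, hφψ]
  simp only [Formula.realize_relabel, realize_toFormula, Fin.append_left_nil _ _ rfl]
  rfl

theorem IsUniversal.exists_realize_iff_and {φ₁ φ₂ : L.Formula α} (h₁ : φ₁.IsUniversal)
    (h₂ : φ₂.IsUniversal) :
    ∃ χ : L.Formula α, χ.IsUniversal ∧
      ∀ {K : Type*} [L.Structure K] [Nonempty K] (v : α → K),
        χ.Realize v ↔ φ₁.Realize v ∧ φ₂.Realize v := by
  obtain ⟨r₁, ψ₁, hψ₁, hφψ₁⟩ := h₁.exists_isQF_formula_realize_iff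
  obtain ⟨r₂, ψ₂, hψ₂, hφψ₂⟩ := h₂.exists_isQF_formula_realize_iff
  refine ⟨(ψ₁.relabel (Sum.map id Sum.inl) ⊓ ψ₂.relabel (Sum.map id Sum.inr)).iAlls
    (Fin r₁ ⊕ Fin r₂), ((hψ₁.relabel _).inf (hψ₂.relabel _)).isUniversal_iAlls,
    fun {K} _ _ v => ?_⟩
  rw [hφψ₁, hφψ₂]
  simp only [Formula.realize_iAlls, Formula.realize_inf, Formula.realize_relabel, Sum.elim_comp_map,
    Function.comp_id]
  refine ⟨fun h => ⟨fun ys₁ => (h (Sum.elim ys₁ fun _ => Classical.arbitrary K)).1,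
    fun ys₂ => (h (Sum.elim (fun _ => Classical.arbitrary K) ys₂)).2⟩,
    fun h ys => ⟨h.1 _, h.2 _⟩⟩

end FirstOrder.Language.BoundedFormula

theorem Ultrafilter.exists_forall_mem_of_directed {ι α : Type*} [Nonempty ι] {A : ι → Set α}
    (hd : Directed (· ⊇ ·) A) (hA : ∀ i, (A i).Nonempty) :
    ∃ U : Ultrafilter α, ∀ i, A i ∈ U := by
  have : (⨅ i, Filter.principal (A i)).NeBot :=
    Filter.iInf_neBot_of_directed'
      (fun i j => (hd i j).imp fun _ hk =>
        ⟨Filter.principal_mono.2 hk.1, Filter.principal_mono.2 hk.2⟩)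
      fun i => Filter.principal_neBot_iff.2 (hA i)
  exact ⟨.of _, fun i =>
    Ultrafilter.of_le _ (Filter.mem_iInf_of_mem i (Filter.mem_principal_self _))⟩

namespace FirstOrder.Language

open BoundedFormula

section Preservation

variable (L : Language) {N P : Type*} [L.Structure N] [L.Structure P]

def PreservesUniversal (f : N → P) : Prop :=
  ∀ (m : ℕ) (φ : L.Formula (Fin m)), φ.IsUniversal → ∀ v : Fin m → N,
    φ.Realize v → φ.Realize (f ∘ v)

variable {L} {f : N → P} {m n : ℕ}

theorem BoundedFormula.IsUniversal.realize_comp {φ : L.BoundedFormula (Fin m) n}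
    (hφ : φ.IsUniversal) (hf : PreservesUniversal L f) {v : Fin m → N} {xs : Fin n → N}
    (h : φ.Realize v xs) :
    φ.Realize (f ∘ v) (f ∘ xs) := by
  have := hf _ (φ.toFormula.relabel finSumFinEquiv) (hφ.toFormula.formula_relabel _)
    (Sum.elim v xs ∘ finSumFinEquiv.symm)
    (by simpa [Formula.realize_relabel, Function.comp_assoc] using h)
  simpa [Formula.realize_relabel, Function.comp_assoc, ← Sum.comp_elim] using this

theorem _root_.IsQN.realize_comp {φ : L.BoundedFormula (Fin m) n} (hφ : IsQN true 2 φ)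
    (hf : PreservesUniversal L f) {v : Fin m → N} {xs : Fin n → N} (h : φ.Realize v xs) :
    φ.Realize (f ∘ v) (f ∘ xs) := by
  generalize hb : true = b, hk : 2 = k at hφ
  induction hφ with
  | of_isQF hφ => exact hφ.isUniversal.realize_comp hf h
  | @of_flip b k n φ hφ =>
    subst hb
    obtain rfl : k = 1 := by omega
    exact (isQN_false_one_iff.1 hφ).realize_comp hf h
  | ex _ ih =>
    obtain ⟨x, hx⟩ := realize_ex.1 h
    exact realize_ex.2 ⟨f x, by simpa [Fin.comp_snoc] using ih hx hb hk⟩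
  | all => cases hb

end Preservation

noncomputable def Ultraproduct.diagonal {L : Language} {ι : Type*} (U : Ultrafilter ι) (M : Type*)
    [L.Structure M] [Nonempty M] : M ↪ₑ[L] (U : Filter ι).Product fun _ => M where
  toFun a := ((fun _ => a : ι → M) : (U : Filter ι).Product fun _ => M)
  map_formula' n φ x := (realize_formula_cast φ (fun i _ => x i)).trans (by simp)

namespace Substructure

variable {L : Language} {N : Type w} [L.Structure N]

def IsExistsForallClosed (M : L.Substructure N) : Prop :=
  ∀ (m : ℕ) (φ : L.Formula (Fin m)), IsQN true 2 φ → ∀ v : Fin m → M,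
    φ.Realize (fun i => (v i : N)) → φ.Realize v

def Retraction (M : L.Substructure N) : Type _ := {h : N → M // ∀ a : M, h a = a}

variable {M : L.Substructure N}

instance [Nonempty M] : Nonempty M.Retraction := by
  classical
  exact ⟨⟨fun x => if hx : x ∈ M then ⟨x, hx⟩ else Classical.arbitrary M,
    fun a => by simp⟩⟩

theorem IsExistsForallClosed.nonempty [Nonempty N] (hM : M.IsExistsForallClosed) : Nonempty M := by
  let v : Fin 0 → M := finZeroElim
  have hN : Formula.Realize (⊤ : L.BoundedFormula (Fin 0) 1).ex fun i => (v i : N) :=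
    realize_ex.2 ⟨Classical.arbitrary N, realize_top.2 trivial⟩
  obtain ⟨a, -⟩ := realize_ex.1 (hM 0 _ (.ex (.of_isQF IsQF.top)) v hN)
  exact ⟨a⟩

theorem IsExistsForallClosed.exists_retraction_realize [Nonempty M]
    (hM : M.IsExistsForallClosed) {m : ℕ} {φ : L.Formula (Fin m)} (hφ : φ.IsUniversal)
    {v : Fin m → N} (hv : φ.Realize v) : ∃ h : M.Retraction, φ.Realize (h.1 ∘ v) := by
  classical
  obtain ⟨r⟩ : Nonempty M.Retraction := inferInstance
  -- one variable per parameter value outside `M` (not per index), so that the witnesses found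
  -- in `M` define a function on `N`
  let γ := ↥(Set.range v \ (M : Set N))
  let fs : Fin m → Fin m ⊕ γ := fun i =>
    if hi : v i ∈ M then .inl i else .inr ⟨v i, ⟨i, rfl⟩, hi⟩
  have hN : ((φ.relabel fs).iExs γ).Realize fun i => (r.1 (v i) : N) := by
    refine Formula.realize_iExs.2 ⟨Subtype.val, Formula.realize_relabel.2 ?_⟩
    convert hv using 1
    funext i
    by_cases hi : v i ∈ M <;> simp [fs, hi, r.2 ⟨v i, _⟩]
  obtain ⟨ys, hys⟩ := Formula.realize_iExs.1 (hM m _ (hφ.relabel _).isQN_iExs (r.1 ∘ v) hN)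
  refine ⟨⟨fun x => if hx : x ∈ Set.range v \ M then ys ⟨x, hx⟩ else r.1 x,
    fun a => by simp [r.2]⟩, ?_⟩
  convert Formula.realize_relabel.1 hys using 1
  funext i
  by_cases hi : v i ∈ M <;> simp [fs, hi]

theorem IsExistsForallClosed.exists_ultrafilter [Nonempty M] (hM : M.IsExistsForallClosed) :
    ∃ U : Ultrafilter M.Retraction, ∀ (m : ℕ) (φ : L.Formula (Fin m)), φ.IsUniversal →
      ∀ v : Fin m → N, φ.Realize v →
        ∀ᶠ h in (U : Filter M.Retraction), φ.Realize (h.1 ∘ v) := by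
  have : Nonempty N := ⟨(Classical.arbitrary M : N)⟩
  let D := Σ m : ℕ,
    {p : L.Formula (Fin m) × (Fin m → N) // p.1.IsUniversal ∧ p.1.Realize p.2}
  let A : D → Set M.Retraction := fun d => {h | d.2.1.1.Realize (h.1 ∘ d.2.1.2)}
  have : Nonempty D := ⟨⟨0, (⊤, default), IsQF.top.isUniversal, realize_top.2 trivial⟩⟩
  have hd : Directed (· ⊇ ·) A := by
    rintro ⟨m₁, ⟨φ₁, v₁⟩, hφ₁, hv₁⟩ ⟨m₂, ⟨φ₂, v₂⟩, hφ₂, hv₂⟩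
    obtain ⟨χ, hχ, hχφ⟩ :=
      (hφ₁.formula_relabel (Fin.castAdd m₂)).exists_realize_iff_and
        (hφ₂.formula_relabel (Fin.natAdd m₁))
    have hχ' : ∀ {K : Type w} [L.Structure K] [Nonempty K] (g : N → K),
        χ.Realize (g ∘ Fin.append v₁ v₂) ↔
          φ₁.Realize (g ∘ v₁) ∧ φ₂.Realize (g ∘ v₂) := by
      intro K _ _ g
      rw [hχφ]
      simp only [Formula.realize_relabel, Function.comp_def, Fin.append_left,
        Fin.append_right]
    exact ⟨⟨m₁ + m₂, (χ, Fin.append v₁ v₂), hχ, (hχ' id).2 ⟨hv₁, hv₂⟩⟩,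
      fun h hh => ((hχ' h.1).1 hh).1, fun h hh => ((hχ' h.1).1 hh).2⟩
  obtain ⟨U, hU⟩ := Ultrafilter.exists_forall_mem_of_directed hd
    fun d => hM.exists_retraction_realize d.2.2.1 d.2.2.2
  exact ⟨U, fun m φ hφ v hv => hU ⟨m, (φ, v), hφ, hv⟩⟩

theorem IsExistsForallClosed.exists_elementaryEmbedding (hM : M.IsExistsForallClosed) :
    ∃ (M' : Type w) (_ : L.Structure M') (g : M ↪ₑ[L] M') (f : N → M'),
      (∀ a : M, f a = g a) ∧ PreservesUniversal L f := by
  cases isEmpty_or_nonempty N with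
  | inl hN =>
    -- Łoś's theorem needs `M` nonempty; for empty `N` the identity of `M` will do
    refine ⟨M, inferInstance, ElementaryEmbedding.refl L M, isEmptyElim,
      fun a => isEmptyElim (a : N), fun m φ hφ v hv => ?_⟩
    refine hM m φ (.of_flip (isQN_false_one_iff.2 hφ)) _ ?_
    convert hv
  | inr hN =>
    have := hM.nonempty
    obtain ⟨U, hU⟩ := hM.exists_ultrafilter
    refine ⟨_, inferInstance, Ultraproduct.diagonal U M,
      fun x => ((fun h : M.Retraction => h.1 x : M.Retraction → M) :
        (U : Filter M.Retraction).Product fun _ => M),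
      fun a => ?_, fun m φ hφ v hv => ?_⟩
    · exact congrArg _ (funext fun h : M.Retraction => h.2 a)
    · exact (Ultraproduct.realize_formula_cast φ fun i (h : M.Retraction) => h.1 (v i)).2
        (hU m φ hφ v hv)

theorem isExistsForallClosed_of_elementaryEmbedding {M' : Type*} [L.Structure M']
    (g : M ↪ₑ[L] M') {f : N → M'} (hfg : ∀ a : M, f a = g a) (hf : PreservesUniversal L f) :
    M.IsExistsForallClosed := by
  intro m φ hφ v hv
  have hfv := hφ.realize_comp hf hv
  rw [Subsingleton.elim (f ∘ default) default,
    show f ∘ (fun i => (v i : N)) = g ∘ v from funext fun i => hfg (v i)] at hfv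
  exact (g.map_formula φ v).1 hfv

end Substructure

end FirstOrder.Language

/-- for a substructure `M` of an `L`-structure `N`, `M` is `∃∀`-closed in `N`
(every `∃∀`-formula with parameters in `M` true in `N` is true in `M`) if and only if there is
an elementary extension `M'` of `M` and a map `f : N → M'` fixing `M` pointwise which preserves
all universal formulas. -/
theorem statement5 (L : FirstOrder.Language.{u, v}) (N : Type w) [L.Structure N]
    (M : L.Substructure N) :
    -- `M ⊆_{∃∀} N`:
    (∀ (m : ℕ) (φ : L.Formula (Fin m)), IsQN true 2 φ → ∀ v : Fin m → M,
      Formula.Realize (M := N) φ (fun i => (v i : N)) → Formula.Realize (M := M) φ v) ↔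
    -- iff there is a universal-formula-preserving map from `N` to an elementary extension of
    -- `M`, fixing `M` pointwise:
    ∃ (M' : Type w) (_ : L.Structure M') (g : M ↪ₑ[L] M') (f : N → M'),
      (∀ a : M, f (a : N) = g a) ∧
      (∀ (m : ℕ) (φ : L.Formula (Fin m)), IsQN false 1 φ → ∀ v : Fin m → N,
        Formula.Realize φ v → Formula.Realize φ (f ∘ v)) := by
  constructor
  · intro hM
    obtain ⟨M', _, g, f, hfg, hf⟩ :=
      Substructure.IsExistsForallClosed.exists_elementaryEmbedding hM
    exact ⟨M', _, g, f, hfg, fun m φ hφ => hf m φ (isQN_false_one_iff.1 hφ)⟩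
  · rintro ⟨M', _, g, f, hfg, hf⟩
    exact Substructure.isExistsForallClosed_of_elementaryEmbedding g hfg
      fun m φ hφ => hf m φ (isQN_false_one_iff.2 hφ)
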